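/- arXiv:2505.02637 — 3 statements merged into one kernel-verified Lean document; each statement's English description precedes it below -/
import Mathlib

section
/- Let $\tilde\theta \sim N(\theta, s)$ with $s = \sigma^2/n > 0$, and let $\hat\delta = (1 - \lambda^2\sigma^2/\tilde\theta^2)_+ \tilde\theta$ be the garrotte estimator with threshold $\lambda\sigma > 0$. Then $\mathbb{E}(\hat\delta - \theta)^2 \leq \lambda^2\sigma^2 + 3s$. -/
/-!
With `t = λσ`, the garrotte estimator is `x + g x`, where `g x = -x` for `x² ≤ t²` and
`g x = -t²/x` otherwise. This `g` is continuous, bounded by `|t|` and differentiable off `±t`, so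
integrating by parts against the Gaussian density (whose logarithmic derivative is `-(x - θ)/s`)
gives Stein's identity `E[(X - θ) g X] = s E[g' X]`, hence the unbiased risk estimate
`E(X + g X - θ)² = E[s + 2 s g' X + (g X)²]`. Pointwise the integrand is `x² - s ≤ t² - s` when
`x² ≤ t²` and `s + (2 s t² + t⁴)/x² ≤ t² + 3 s` otherwise.
-/

open MeasureTheory ProbabilityTheory Real Filter Set Topology
open scoped NNReal

theorem integral_eq_zero_of_hasDerivAt_off_finite_of_integrable
    {E : Type*} [NormedAddCommGroup E] [NormedSpace ℝ E] [CompleteSpace E]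
    {f f' : ℝ → E} {s : Set ℝ} (hs : s.Finite) (hf : Continuous f)
    (hderiv : ∀ x ∉ s, HasDerivAt f (f' x) x) (hf' : Integrable f') (hfi : Integrable f) :
    ∫ x, f' x = 0 := by
  obtain ⟨a, ha⟩ := hs.bddBelow
  obtain ⟨b, hb⟩ := hs.bddAbove
  have hbot : Tendsto f atBot (𝓝 0) :=
    tendsto_zero_of_hasDerivAt_of_integrableOn_Iic (a := a - 1)
      (fun x hx => hderiv x fun hxs => (ha hxs).not_gt (hx.trans_lt (sub_one_lt a)))
      hf'.integrableOn hfi.integrableOn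
  have htop : Tendsto f atTop (𝓝 0) :=
    tendsto_zero_of_hasDerivAt_of_integrableOn_Ioi (a := b)
      (fun x hx => hderiv x fun hxs => (hb hxs).not_gt hx)
      hf'.integrableOn hfi.integrableOn
  have hftc : ∀ R, ∫ x in -R..R, f' x = f R - f (-R) := fun R =>
    integral_eq_of_hasDerivAt_off_countable f f' hs.countable hf.continuousOn
      (fun x hx => hderiv x hx.2) hf'.intervalIntegrable
  have hlim := intervalIntegral_tendsto_integral hf' tendsto_neg_atTop_atBot tendsto_id
  simp only [id, hftc] at hlim
  refine tendsto_nhds_unique hlim ?_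
  simpa using htop.sub (hbot.comp tendsto_neg_atTop_atBot)

lemma hasDerivAt_gaussianPDFReal (θ : ℝ) (v : ℝ≥0) (x : ℝ) :
    HasDerivAt (gaussianPDFReal θ v) (-((x - θ) / v) * gaussianPDFReal θ v x) x := by
  have hexp : HasDerivAt (fun y => -(y - θ) ^ 2 / (2 * v)) (-((x - θ) / v)) x := by
    refine (((hasDerivAt_id x).sub_const θ).pow 2).neg.div_const (2 * (v : ℝ)) |>.congr_deriv ?_
    norm_num
    rw [neg_div, mul_div_mul_left _ _ two_ne_zero]
  rw [gaussianPDFReal_def]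
  exact (hexp.exp.const_mul _).congr_deriv (by ring)

lemma integrable_gaussianReal_iff {E : Type*} [NormedAddCommGroup E] [NormedSpace ℝ E]
    {θ : ℝ} {v : ℝ≥0} {f : ℝ → E} (hv : v ≠ 0) :
    Integrable f (gaussianReal θ v) ↔ Integrable (fun x => gaussianPDFReal θ v x • f x) := by
  simp [gaussianReal, hv,
    integrable_withDensity_iff_integrable_smul' (measurable_gaussianPDF _ _)
      (ae_of_all _ fun _ ↦ gaussianPDF_lt_top)]

theorem integral_sub_mul_gaussianReal {θ : ℝ} {v : ℝ≥0} (hv : v ≠ 0) {g g' : ℝ → ℝ}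
    {s : Set ℝ} {C : ℝ} (hs : s.Finite) (hg : Continuous g) (hgC : ∀ x, |g x| ≤ C)
    (hderiv : ∀ x ∉ s, HasDerivAt g (g' x) x) (hg' : Integrable g' (gaussianReal θ v)) :
    ∫ x, (x - θ) * g x ∂gaussianReal θ v = v * ∫ x, g' x ∂gaussianReal θ v := by
  set φ := gaussianPDFReal θ v
  have hφc : Continuous φ :=
    continuous_iff_continuousAt.2 fun x => (hasDerivAt_gaussianPDFReal θ v x).continuousAt
  have hbdd : ∀ᵐ x, ‖g x‖ ≤ C := ae_of_all _ hgC
  have hφ : Integrable φ := integrable_gaussianPDFReal θ v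
  have hφg' : Integrable fun x => φ x * g' x := (integrable_gaussianReal_iff hv).1 hg'
  have hφid : Integrable fun x => φ x * (x - θ) := (integrable_gaussianReal_iff hv).1
    ((memLp_id_gaussianReal 1).integrable le_rfl |>.sub (integrable_const θ))
  have hφidg : Integrable fun x => φ x * ((x - θ) * g x) := by
    simpa only [mul_assoc] using hφid.mul_bdd hg.aestronglyMeasurable hbdd
  -- `v φ' = -(x - θ) φ`, so `v (g φ)'` is the difference of the two integrands.
  have hzero : ∫ x, (v * (φ x * g' x) - φ x * ((x - θ) * g x)) = 0 := by
    refine integral_eq_zero_of_hasDerivAt_off_finite_of_integrable (f := fun x => v * (g x * φ x))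
      hs (by fun_prop) (fun x hx => ?_) ((hφg'.const_mul _).sub hφidg)
      ((hφ.bdd_mul hg.aestronglyMeasurable hbdd).const_mul _)
    refine (((hderiv x hx).mul (hasDerivAt_gaussianPDFReal θ v x)).const_mul (v : ℝ)).congr_deriv ?_
    have : (v : ℝ) ≠ 0 := by exact_mod_cast hv
    field_simp
    ring
  have hsplit := integral_sub (hφg'.const_mul (v : ℝ)) hφidg
  rw [hzero, integral_const_mul] at hsplit
  simp only [integral_gaussianReal_eq_integral_smul hv, smul_eq_mul]
  linarith

lemma integrable_pow_of_abs_le {α : Type*} [MeasurableSpace α] {μ : Measure α}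
    [IsFiniteMeasure μ] {g : α → ℝ} {C : ℝ} (hg : AEStronglyMeasurable g μ)
    (hgC : ∀ x, |g x| ≤ C) (n : ℕ) : Integrable (fun x => g x ^ n) μ :=
  .of_bound (hg.pow n) (C ^ n) <| ae_of_all _ fun x => by
    simpa [abs_pow] using pow_le_pow_left₀ (abs_nonneg _) (hgC x) n

lemma integral_sub_sq_gaussianReal (θ : ℝ) (v : ℝ≥0) :
    ∫ x, (x - θ) ^ 2 ∂gaussianReal θ v = v := by
  simpa [variance_eq_integral measurable_id.aemeasurable, integral_id_gaussianReal]
    using variance_id_gaussianReal (μ := θ) (v := v)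

theorem integral_add_sub_sq_gaussianReal {θ : ℝ} {v : ℝ≥0} (hv : v ≠ 0) {g g' : ℝ → ℝ}
    {s : Set ℝ} {C : ℝ} (hs : s.Finite) (hg : Continuous g) (hgC : ∀ x, |g x| ≤ C)
    (hderiv : ∀ x ∉ s, HasDerivAt g (g' x) x) (hg' : Integrable g' (gaussianReal θ v)) :
    ∫ x, (x + g x - θ) ^ 2 ∂gaussianReal θ v
      = ∫ x, (v + 2 * v * g' x + g x ^ 2) ∂gaussianReal θ v := by
  have hsq : Integrable (fun x => (x - θ) ^ 2) (gaussianReal θ v) :=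
    ((memLp_id_gaussianReal' 2 (by norm_num)).sub (memLp_const θ)).integrable_sq
  have hcross : Integrable (fun x => (x - θ) * g x) (gaussianReal θ v) :=
    ((memLp_id_gaussianReal 1).integrable le_rfl |>.sub (integrable_const θ)).mul_bdd
      hg.aestronglyMeasurable (ae_of_all _ hgC)
  have hg2 := integrable_pow_of_abs_le (μ := gaussianReal θ v) hg.aestronglyMeasurable hgC 2
  calc ∫ x, (x + g x - θ) ^ 2 ∂gaussianReal θ v
      = ∫ x, ((x - θ) ^ 2 + 2 * ((x - θ) * g x) + g x ^ 2) ∂gaussianReal θ v := by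
        congr with x; ring
    _ = v + 2 * (v * ∫ x, g' x ∂gaussianReal θ v) + ∫ x, g x ^ 2 ∂gaussianReal θ v := by
        rw [integral_add (hsq.fun_add (hcross.const_mul 2)) hg2,
          integral_add hsq (hcross.const_mul 2), integral_const_mul, integral_sub_sq_gaussianReal,
          integral_sub_mul_gaussianReal hv hs hg hgC hderiv hg']
    _ = ∫ x, (v + 2 * v * g' x + g x ^ 2) ∂gaussianReal θ v := by
        rw [integral_add ((integrable_const _).fun_add (hg'.const_mul _)) hg2,
          integral_add (integrable_const _) (hg'.const_mul _), integral_const, integral_const_mul]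
        simp only [probReal_univ, smul_eq_mul, one_mul]
        ring

theorem integral_add_sub_sq_gaussianReal_le {θ : ℝ} {v : ℝ≥0} (hv : v ≠ 0) {g g' : ℝ → ℝ}
    {s : Set ℝ} {C B : ℝ} (hs : s.Finite) (hg : Continuous g) (hgC : ∀ x, |g x| ≤ C)
    (hderiv : ∀ x ∉ s, HasDerivAt g (g' x) x) (hg' : Integrable g' (gaussianReal θ v))
    (hB : ∀ x, v + 2 * v * g' x + g x ^ 2 ≤ B) :
    ∫ x, (x + g x - θ) ^ 2 ∂gaussianReal θ v ≤ B := by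
  rw [integral_add_sub_sq_gaussianReal hv hs hg hgC hderiv hg']
  have hint : Integrable (fun x => v + 2 * v * g' x + g x ^ 2) (gaussianReal θ v) :=
    ((integrable_const _).fun_add (hg'.const_mul _)).fun_add
      (integrable_pow_of_abs_le hg.aestronglyMeasurable hgC 2)
  simpa using integral_mono hint (integrable_const B) hB

noncomputable def garrotteShift (t x : ℝ) : ℝ := if x ^ 2 ≤ t ^ 2 then -x else -(t ^ 2 / x)

noncomputable def garrotteShiftDeriv (t x : ℝ) : ℝ := if x ^ 2 ≤ t ^ 2 then -1 else t ^ 2 / x ^ 2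

lemma max_mul_eq_add_garrotteShift (t x : ℝ) :
    max (1 - t ^ 2 / x ^ 2) 0 * x = x + garrotteShift t x := by
  unfold garrotteShift
  split_ifs with h
  · rcases eq_or_ne x 0 with rfl | hx
    · simp
    · rw [max_eq_right (by rw [sub_nonpos, one_le_div (by positivity)]; exact h)]
      ring
  · rw [not_le] at h
    have hx : x ≠ 0 := by rintro rfl; nlinarith [sq_nonneg t]
    rw [max_eq_left (by rw [sub_nonneg, div_le_one (by positivity)]; exact h.le)]
    field_simp
    ring

lemma continuous_garrotteShift {t : ℝ} (ht : t ≠ 0) : Continuous (garrotteShift t) := by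
  refine continuous_if_le (f := fun x : ℝ => x ^ 2) (g := fun _ => t ^ 2) (by fun_prop)
    continuous_const continuous_neg.continuousOn ?_ fun x hx => ?_
  · intro x (hx : t ^ 2 ≤ x ^ 2)
    have hx0 : x ≠ 0 := by rintro rfl; nlinarith [pow_pos (abs_pos.2 ht) 2, sq_abs t]
    exact (continuousAt_const.div continuousAt_id hx0).neg.continuousWithinAt
  · have hx0 : x ≠ 0 := by rintro rfl; nlinarith [pow_pos (abs_pos.2 ht) 2, sq_abs t]
    rw [← hx]
    field_simp

lemma abs_garrotteShift_le (t x : ℝ) : |garrotteShift t x| ≤ |t| := by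
  unfold garrotteShift
  split_ifs with h
  · simpa using sq_le_sq.1 h
  · rw [not_le] at h
    have hx : 0 < |x| := by rw [abs_pos]; rintro rfl; nlinarith [sq_nonneg t]
    have htx : |t| < |x| := sq_lt_sq.1 h
    rw [abs_neg, abs_div, abs_pow, sq, div_le_iff₀ hx]
    exact mul_le_mul_of_nonneg_left htx.le (abs_nonneg t)

lemma hasDerivAt_garrotteShift {t x : ℝ} (hx : x ^ 2 ≠ t ^ 2) :
    HasDerivAt (garrotteShift t) (garrotteShiftDeriv t x) x := by
  unfold garrotteShiftDeriv
  rcases hx.lt_or_gt with hlt | hgt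
  · rw [if_pos hlt.le]
    have hev : garrotteShift t =ᶠ[𝓝 x] fun y => -y :=
      Filter.eventually_of_mem ((isOpen_lt (continuous_pow 2) continuous_const).mem_nhds hlt)
        fun y (hy : y ^ 2 < t ^ 2) => if_pos hy.le
    exact (hasDerivAt_neg x).congr_of_eventuallyEq hev
  · rw [if_neg hgt.not_ge]
    have hx0 : x ≠ 0 := by rintro rfl; nlinarith [sq_nonneg t]
    have hev : garrotteShift t =ᶠ[𝓝 x] fun y => -(t ^ 2 / y) :=
      Filter.eventually_of_mem ((isOpen_lt continuous_const (continuous_pow 2)).mem_nhds hgt)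
        fun y (hy : t ^ 2 < y ^ 2) => if_neg hy.not_ge
    refine ((hasDerivAt_inv hx0).const_mul (t ^ 2)).neg.congr_of_eventuallyEq ?_ |>.congr_deriv ?_
    · simpa only [Pi.neg_def, div_eq_mul_inv] using hev
    · field_simp

lemma abs_garrotteShiftDeriv_le_one (t x : ℝ) : |garrotteShiftDeriv t x| ≤ 1 := by
  unfold garrotteShiftDeriv
  split_ifs with h
  · simp
  · rw [not_le] at h
    rw [abs_of_nonneg (by positivity), div_le_one (by nlinarith [sq_nonneg t])]
    exact h.le

lemma integrable_garrotteShiftDeriv {μ : Measure ℝ} [IsFiniteMeasure μ] (t : ℝ) :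
    Integrable (garrotteShiftDeriv t) μ :=
  .of_bound (Measurable.ite (measurableSet_le (by fun_prop) measurable_const) measurable_const
    (by fun_prop)).aestronglyMeasurable 1 (ae_of_all _ (abs_garrotteShiftDeriv_le_one t))

lemma garrotte_unbiased_risk_estimate_le {v : ℝ} (hv : 0 ≤ v) (t x : ℝ) :
    v + 2 * v * garrotteShiftDeriv t x + garrotteShift t x ^ 2 ≤ t ^ 2 + 3 * v := by
  unfold garrotteShift garrotteShiftDeriv
  split_ifs with h
  · nlinarith
  · rw [not_le] at h
    have hx : 0 < x ^ 2 := by nlinarith [sq_nonneg t]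
    have hq : t ^ 2 / x ^ 2 ≤ 1 := (div_le_one hx).2 h.le
    have hsq : (-(t ^ 2 / x)) ^ 2 = t ^ 2 * (t ^ 2 / x ^ 2) := by field_simp
    rw [hsq]
    nlinarith [sq_nonneg t]

/-- For `θ̃ ~ N(θ, s)` with `s = σ²/n > 0`, the garrotte estimator
`δ̂ = (1 - λ²σ²/θ̃²)₊ θ̃` with threshold `λσ > 0` satisfies
`E(δ̂ - θ)² ≤ λ²σ² + 3 s`. -/
theorem stmt_9 (θ lam σ : ℝ) (hlam : 0 < lam) (hσ : 0 < σ) (n : ℕ) (hn : 1 ≤ n)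
    (v : NNReal) (hv : (v : ℝ) = σ ^ 2 / n) :
    ∫ x, (max (1 - lam ^ 2 * σ ^ 2 / x ^ 2) 0 * x - θ) ^ 2 ∂(gaussianReal θ v)
      ≤ lam ^ 2 * σ ^ 2 + 3 * (σ ^ 2 / n) := by
  have hv0 : v ≠ 0 := by
    have : (0 : ℝ) < n := by exact_mod_cast hn
    rw [← NNReal.coe_ne_zero, hv]
    positivity
  have ht : lam * σ ≠ 0 := by positivity
  simp_rw [← mul_pow, max_mul_eq_add_garrotteShift, ← hv]
  refine integral_add_sub_sq_gaussianReal_le hv0 (toFinite {lam * σ, -(lam * σ)})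
    (continuous_garrotteShift ht) (abs_garrotteShift_le _)
    (fun x hx => hasDerivAt_garrotteShift ?_) (integrable_garrotteShiftDeriv _)
    (garrotte_unbiased_risk_estimate_le v.coe_nonneg _)
  simpa [sq_eq_sq_iff_eq_or_eq_neg, or_comm] using hx
end

section
/- Let $\tilde\theta \sim N(\theta, s)$ with $s > 0$, and let $\hat\delta = (1 - \lambda^2\sigma^2/\tilde\theta^2)_+ \tilde\theta$ with $\lambda\sigma > 0$. Then $\mathbb{E}(\hat\delta - \theta)^2 \leq \theta^2 + 4s$. -/
/-!
The garrotte estimator only shrinks: `δ̂ = m θ̃` with `m ∈ [0, 1]`. For such `m`,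
`(m x - θ)² ≤ θ² + (x - θ)²` pointwise, since the gap is `(θ - (1 - m) x)² + 2 m (1 - m) x²`.
Taking expectations gives `E(δ̂ - θ)² ≤ θ² + s`, which is even better than `θ² + 4 s`.
-/

open MeasureTheory ProbabilityTheory Set

lemma sq_mul_sub_le_sq_add_sq_sub {m : ℝ} (hm : m ∈ Icc (0 : ℝ) 1) (x c : ℝ) :
    (m * x - c) ^ 2 ≤ c ^ 2 + (x - c) ^ 2 := by
  have hgap : c ^ 2 + (x - c) ^ 2 - (m * x - c) ^ 2
      = (c - (1 - m) * x) ^ 2 + 2 * (m * (1 - m)) * x ^ 2 := by ring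
  have hm' : 0 ≤ m * (1 - m) := mul_nonneg hm.1 (sub_nonneg.mpr hm.2)
  linarith [sq_nonneg (c - (1 - m) * x), mul_nonneg hm' (sq_nonneg x)]

lemma max_one_sub_div_sq_zero_mem_Icc {a : ℝ} (ha : 0 ≤ a) (x : ℝ) :
    max (1 - a / x ^ 2) 0 ∈ Icc (0 : ℝ) 1 :=
  ⟨le_max_right _ _, max_le (by linarith [div_nonneg ha (sq_nonneg x)]) zero_le_one⟩

lemma integral_sq_mul_sub_le {Ω : Type*} [MeasurableSpace Ω] {μ : Measure Ω}
    [IsProbabilityMeasure μ] {X g : Ω → ℝ} (hX : MemLp X 2 μ) (hg : ∀ ω, g ω ∈ Icc (0 : ℝ) 1)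
    (c : ℝ) :
    ∫ ω, (g ω * X ω - c) ^ 2 ∂μ ≤ c ^ 2 + ∫ ω, (X ω - c) ^ 2 ∂μ := by
  have hXc : Integrable (fun ω ↦ (X ω - c) ^ 2) μ :=
    (hX.sub (memLp_const c)).integrable_sq
  calc ∫ ω, (g ω * X ω - c) ^ 2 ∂μ ≤ ∫ ω, (c ^ 2 + (X ω - c) ^ 2) ∂μ :=
        integral_mono_of_nonneg (.of_forall fun _ ↦ sq_nonneg _) ((integrable_const _).add hXc)
          (.of_forall fun ω ↦ sq_mul_sub_le_sq_add_sq_sub (hg ω) (X ω) c)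
    _ = c ^ 2 + ∫ ω, (X ω - c) ^ 2 ∂μ := by
        rw [integral_add (integrable_const _) hXc, integral_const, probReal_univ, one_smul]

lemma integral_sq_mul_sub_mean_le {Ω : Type*} [MeasurableSpace Ω] {μ : Measure Ω}
    [IsProbabilityMeasure μ] {X g : Ω → ℝ} (hX : MemLp X 2 μ) (hg : ∀ ω, g ω ∈ Icc (0 : ℝ) 1) :
    ∫ ω, (g ω * X ω - μ[X]) ^ 2 ∂μ ≤ μ[X] ^ 2 + Var[X; μ] := by
  rw [variance_eq_integral hX.aestronglyMeasurable.aemeasurable]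
  exact integral_sq_mul_sub_le hX hg _

theorem stmt_10_general (θ lam σ : ℝ)
    (v : NNReal) :
    ∫ x, (max (1 - lam ^ 2 * σ ^ 2 / x ^ 2) 0 * x - θ) ^ 2 ∂(gaussianReal θ v)
      ≤ θ ^ 2 + 4 * (v : ℝ) := by
  have h := integral_sq_mul_sub_mean_le (X := fun x ↦ x)
    (memLp_id_gaussianReal (μ := θ) (v := v) 2)
    (max_one_sub_div_sq_zero_mem_Icc (by positivity : 0 ≤ lam ^ 2 * σ ^ 2))
  rw [integral_id_gaussianReal, variance_fun_id_gaussianReal] at h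
  linarith [v.coe_nonneg]

/-- For `θ̃ ~ N(θ, s)` with `s > 0`, the garrotte estimator
`δ̂ = (1 - λ²σ²/θ̃²)₊ θ̃` with threshold `λσ > 0` satisfies
`E(δ̂ - θ)² ≤ θ² + 4 s`. -/
theorem stmt_10 (θ lam σ : ℝ) (hlam : 0 < lam) (hσ : 0 < σ)
    (v : NNReal) (hv : 0 < (v : ℝ)) :
    ∫ x, (max (1 - lam ^ 2 * σ ^ 2 / x ^ 2) 0 * x - θ) ^ 2 ∂(gaussianReal θ v)
      ≤ θ ^ 2 + 4 * (v : ℝ) :=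
  stmt_10_general θ lam σ v
end

section
/- Let $Z \sim N(\mu, 1)$ and $\tau > 0$. Then $\mathbb{P}(|Z| > \tau) \leq \frac{2\phi(\tau)}{\tau} + \frac{\mu^2}{4}$, where $\phi$ is the standard normal density. -/
/-!
For mean zero this is the Mills ratio bound: on `x > τ` we have `φ ≤ x φ(x) / τ`, and
`x φ(x)` integrates to `φ(τ)`. The mean enters through `r(s) = P(|Z_s| > τ)` with
`Z_s ~ N(s, 1)`, whose derivative is `φ(τ - s) - φ(τ + s)`. Since
`|φ'(x)| = |x| e^{-x²/2} / √(2π) ≤ e^{-1/2} / √(2π) < 1/4`, the density is `1/4`-Lipschitz,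
so `|r'(s)| ≤ |s| / 2` and hence `r(m) ≤ r(0) + m² / 4`.
-/

open MeasureTheory ProbabilityTheory Real Set Filter Topology

theorem le_add_mul_sq_of_abs_hasDerivAt_le {f f' : ℝ → ℝ} {c : ℝ}
    (hf : ∀ s, HasDerivAt f (f' s) s) (hf' : ∀ s, |f' s| ≤ c * |s|) (x : ℝ) :
    f x ≤ f 0 + c * x ^ 2 / 2 := by
  set g : ℝ → ℝ := fun s => f s - c * s ^ 2 / 2
  have hg (s : ℝ) : HasDerivAt g (f' s - c * s) s := by
    refine ((hf s).sub (((hasDerivAt_pow 2 s).const_mul c).div_const 2)).congr_deriv ?_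
    norm_num; ring
  have hg_cont : Continuous g := continuous_iff_continuousAt.2 fun s => (hg s).continuousAt
  suffices g x ≤ g 0 by simpa [g] using this
  rcases le_total 0 x with hx | hx
  · refine antitoneOn_of_hasDerivWithinAt_nonpos (convex_Ici 0) hg_cont.continuousOn
      (fun s _ => (hg s).hasDerivWithinAt) (fun s hs => ?_) self_mem_Ici hx hx
    rw [interior_Ici, mem_Ioi] at hs
    have := (le_abs_self _).trans (hf' s)
    rw [abs_of_pos hs] at this
    linarith
  · refine monotoneOn_of_hasDerivWithinAt_nonneg (convex_Iic 0) hg_cont.continuousOn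
      (fun s _ => (hg s).hasDerivWithinAt) (fun s hs => ?_) hx self_mem_Iic hx
    rw [interior_Iic, mem_Iio] at hs
    have := (neg_le_abs _).trans (hf' s)
    rw [abs_of_neg hs] at this
    linarith

theorem hasDerivAt_intervalIntegral_sub_sub {E : Type*} [NormedAddCommGroup E] [NormedSpace ℝ E]
    [CompleteSpace E] {f : ℝ → E} (hf : Continuous f) (a b s : ℝ) :
    HasDerivAt (fun s => ∫ x in (a - s)..(b - s), f x) (f (a - s) - f (b - s)) s := by
  have hprim (c : ℝ) : HasDerivAt (fun s => ∫ x in (0 : ℝ)..(c - s), f x) (-f (c - s)) s := by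
    simpa [Function.comp_def] using ((hf.integral_hasStrictDerivAt 0 (c - s)).hasDerivAt).scomp s
      ((hasDerivAt_id s).const_sub c)
  convert (hprim b).sub (hprim a) using 1
  · ext s
    exact (intervalIntegral.integral_interval_sub_left (hf.intervalIntegrable _ _)
      (hf.intervalIntegrable _ _)).symm
  · abel

theorem gaussianReal_real_apply (μ : ℝ) {v : NNReal} (hv : v ≠ 0) (A : Set ℝ) :
    (gaussianReal μ v).real A = ∫ x in A, gaussianPDFReal μ v x := by
  rw [measureReal_def, gaussianReal_apply_eq_integral μ hv,
    ENNReal.toReal_ofReal (integral_nonneg (gaussianPDFReal_nonneg μ v))]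

theorem abs_mul_exp_neg_sq_div_two_le (x : ℝ) : |x| * exp (-x ^ 2 / 2) ≤ exp (-1 / 2) := by
  have hx : |x| ≤ exp ((x ^ 2 - 1) / 2) := by
    nlinarith [add_one_le_exp ((x ^ 2 - 1) / 2), sq_nonneg (|x| - 1), sq_abs x]
  calc |x| * exp (-x ^ 2 / 2) ≤ exp ((x ^ 2 - 1) / 2) * exp (-x ^ 2 / 2) := by gcongr
    _ = exp (-1 / 2) := by rw [← exp_add]; ring_nf

theorem exp_neg_half_div_sqrt_two_pi_le : exp (-1 / 2) / √(2 * π) ≤ 1 / 4 := by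
  rw [div_le_div_iff₀ (by positivity) (by norm_num), one_mul]
  refine le_sqrt_of_sq_le ?_
  have : exp (-1 / 2) ^ 2 * exp 1 = 1 := by rw [← exp_nat_mul, ← exp_add]; norm_num
  nlinarith [exp_one_gt_d9, pi_gt_d6, exp_pos (-1 / 2)]

local notation "φ" => gaussianPDFReal 0 1

theorem gaussianPDFReal_zero_one (x : ℝ) : φ x = exp (-x ^ 2 / 2) / √(2 * π) := by
  simp [gaussianPDFReal]
  ring

theorem gaussianPDFReal_zero_one_neg (x : ℝ) : φ (-x) = φ x := by
  simp [gaussianPDFReal_zero_one]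

theorem hasDerivAt_gaussianPDFReal_zero_one (x : ℝ) : HasDerivAt φ (-x * φ x) x := by
  simp only [funext gaussianPDFReal_zero_one]
  refine (((((hasDerivAt_pow 2 x).neg).div_const 2).exp).div_const _).congr_deriv ?_
  norm_num; ring

theorem continuous_gaussianPDFReal_zero_one : Continuous φ :=
  continuous_iff_continuousAt.2 fun x => (hasDerivAt_gaussianPDFReal_zero_one x).continuousAt

theorem abs_sub_gaussianPDFReal_zero_one_le (a b : ℝ) : |φ a - φ b| ≤ |a - b| / 4 := by
  have hbound (x : ℝ) : ‖-x * φ x‖ ≤ 1 / 4 := by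
    rw [norm_eq_abs, neg_mul, abs_neg, abs_mul, abs_of_nonneg (gaussianPDFReal_nonneg 0 1 x),
      gaussianPDFReal_zero_one, ← mul_div_assoc]
    exact (div_le_div_of_nonneg_right (abs_mul_exp_neg_sq_div_two_le x) (by positivity)).trans
      exp_neg_half_div_sqrt_two_pi_le
  have := convex_univ.norm_image_sub_le_of_norm_hasDerivWithin_le
    (fun x _ => (hasDerivAt_gaussianPDFReal_zero_one x).hasDerivWithinAt) (fun x _ => hbound x)
    (mem_univ b) (mem_univ a)
  rw [Real.norm_eq_abs, Real.norm_eq_abs] at this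
  linarith

theorem tendsto_gaussianPDFReal_zero_one_atTop : Tendsto φ atTop (𝓝 0) := by
  simp only [funext gaussianPDFReal_zero_one]
  have : Tendsto (fun x : ℝ => -x ^ 2 / 2) atTop atBot :=
    (tendsto_neg_atBot_iff.2 (tendsto_pow_atTop two_ne_zero)).atBot_div_const two_pos
  simpa using (tendsto_exp_atBot.comp this).div_const (√(2 * π))

theorem integrable_mul_gaussianPDFReal_zero_one : Integrable fun x => x * φ x := by
  convert (integrable_mul_exp_neg_mul_sq (b := 1 / 2) one_half_pos).div_const (√(2 * π))
    using 2 with x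
  rw [gaussianPDFReal_zero_one]
  ring_nf

theorem setIntegral_Ioi_mul_gaussianPDFReal_zero_one (τ : ℝ) :
    ∫ x in Ioi τ, x * φ x = φ τ := by
  simpa using integral_Ioi_of_hasDerivAt_of_tendsto' (f := fun x => -φ x)
    (fun x _ => (hasDerivAt_gaussianPDFReal_zero_one x).neg.congr_deriv (by ring))
    integrable_mul_gaussianPDFReal_zero_one.integrableOn
    tendsto_gaussianPDFReal_zero_one_atTop.neg

theorem setIntegral_Ioi_gaussianPDFReal_zero_one_le {τ : ℝ} (hτ : 0 < τ) :
    ∫ x in Ioi τ, φ x ≤ φ τ / τ := by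
  have hint : IntegrableOn (fun x => x * φ x / τ) (Ioi τ) :=
    integrable_mul_gaussianPDFReal_zero_one.integrableOn.div_const τ
  calc ∫ x in Ioi τ, φ x
      ≤ ∫ x in Ioi τ, x * φ x / τ := by
        refine setIntegral_mono_on (integrable_gaussianPDFReal 0 1).integrableOn hint
          measurableSet_Ioi fun x (hx : τ < x) => ?_
        rw [le_div_iff₀ hτ, mul_comm]
        exact mul_le_mul_of_nonneg_right hx.le (gaussianPDFReal_nonneg 0 1 x)
    _ = φ τ / τ := by rw [integral_div, setIntegral_Ioi_mul_gaussianPDFReal_zero_one]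

theorem gaussianReal_zero_one_real_lt_abs_le {τ : ℝ} (hτ : 0 < τ) :
    (gaussianReal 0 1).real {x | τ < |x|} ≤ 2 * φ τ / τ := by
  have hset : {x : ℝ | τ < |x|} = Iio (-τ) ∪ Ioi τ := by
    ext x
    simp only [mem_ofPred_eq, lt_abs, mem_union, mem_Iio, mem_Ioi]
    constructor <;> rintro (h | h) <;> first | (left; linarith) | (right; linarith)
  have hreflect : ∫ x in Iio (-τ), φ x = ∫ x in Ioi τ, φ x := by
    rw [← integral_Iic_eq_integral_Iio, ← integral_comp_neg_Ioi]
    simp only [gaussianPDFReal_zero_one_neg]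
  rw [gaussianReal_real_apply 0 one_ne_zero, hset,
    setIntegral_union ((Iio_disjoint_Ici (by linarith)).mono_right Ioi_subset_Ici_self)
      measurableSet_Ioi (integrable_gaussianPDFReal 0 1).integrableOn
      (integrable_gaussianPDFReal 0 1).integrableOn,
    hreflect, mul_div_assoc, two_mul]
  exact add_le_add (setIntegral_Ioi_gaussianPDFReal_zero_one_le hτ)
    (setIntegral_Ioi_gaussianPDFReal_zero_one_le hτ)

theorem gaussianReal_real_lt_abs {τ : ℝ} (hτ : 0 ≤ τ) (s : ℝ) :
    (gaussianReal s 1).real {x | τ < |x|} = 1 - ∫ x in (-τ - s)..(τ - s), φ x := by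
  have hset : {x : ℝ | τ < |x|} = (Icc (-τ) τ)ᶜ := by
    ext x
    rw [mem_compl_iff, mem_Icc, ← abs_le, not_le]
    rfl
  rw [hset, probReal_compl_eq_one_sub measurableSet_Icc, gaussianReal_real_apply s one_ne_zero,
    integral_Icc_eq_integral_Ioc, ← intervalIntegral.integral_of_le (by linarith),
    ← intervalIntegral.integral_comp_sub_right]
  simp [gaussianPDFReal_sub]

theorem hasDerivAt_gaussianReal_real_lt_abs {τ : ℝ} (hτ : 0 ≤ τ) (s : ℝ) :
    HasDerivAt (fun s => (gaussianReal s 1).real {x | τ < |x|}) (φ (τ - s) - φ (τ + s)) s := by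
  simp only [gaussianReal_real_lt_abs hτ]
  refine ((hasDerivAt_intervalIntegral_sub_sub continuous_gaussianPDFReal_zero_one
    (-τ) τ s).const_sub 1).congr_deriv ?_
  rw [show -τ - s = -(τ + s) by ring, gaussianPDFReal_zero_one_neg]
  ring

/-- For `Z ~ N(μ, 1)` and `τ > 0`, `P(|Z| > τ) ≤ 2 φ(τ)/τ + μ²/4`, where `φ` is the
standard normal density. -/
theorem stmt_11 (m τ : ℝ) (hτ : 0 < τ) :
    gaussianReal m 1 {x | τ < |x|}
      ≤ ENNReal.ofReal
          (2 * (Real.exp (-τ ^ 2 / 2) / Real.sqrt (2 * Real.pi)) / τ + m ^ 2 / 4) := by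
  have hderiv_le (s : ℝ) : |φ (τ - s) - φ (τ + s)| ≤ 1 / 2 * |s| := by
    have := abs_sub_gaussianPDFReal_zero_one_le (τ - s) (τ + s)
    rw [show τ - s - (τ + s) = -2 * s by ring, abs_mul, abs_neg, abs_two] at this
    linarith
  have hshift := le_add_mul_sq_of_abs_hasDerivAt_le (hasDerivAt_gaussianReal_real_lt_abs hτ.le)
    hderiv_le m
  rw [← ofReal_measureReal, ← gaussianPDFReal_zero_one]
  gcongr
  linarith [gaussianReal_zero_one_real_lt_abs_le hτ]
end
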